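/- Let K, α, t be integers with 2 ≤ α ≤ K - 1 and 0 ≤ t ≤ α - 1. Then the selfish converse load R_LB(t) = (C(α, t+1) + (K - α)·C(α-1, t))/C(α, t) is greater than or equal to the MAN load R_MAN(t) = C(K, t+1)/C(K, t), with strict inequality whenever 1 ≤ t ≤ α - 2. -/

import Mathlib

/-!
Both loads are linear in the binomial ratios `C(n, t+1) / C(n, t) = (n - t) / (t + 1)` and
`C(n-1, t) / C(n, t) = (n - t) / n`, so after these substitutions
`R_LB(t) - R_MAN(t) = (K - α) t (α - 1 - t) / (α (t + 1))`, whose factors are all nonnegative,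
and all positive when `1 ≤ t ≤ α - 2`.
-/

namespace Nat

variable {𝕜 : Type*} [Field 𝕜] [CharZero 𝕜]

theorem cast_choose_succ_div_cast_choose {n k : ℕ} (hk : k ≤ n) :
    (n.choose (k + 1) : 𝕜) / n.choose k = ((n : 𝕜) - k) / (k + 1) := by
  have hne : (n.choose k : 𝕜) ≠ 0 := by exact_mod_cast (choose_pos hk).ne'
  rw [div_eq_div_iff hne (cast_add_one_ne_zero k)]
  have h := congrArg (Nat.cast : ℕ → 𝕜) (choose_succ_right_eq n k)
  push_cast [Nat.cast_sub hk] at h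
  linear_combination h

theorem cast_choose_div_cast_choose_succ {n k : ℕ} (hk : k ≤ n + 1) :
    (n.choose k : 𝕜) / (n + 1).choose k = ((n : 𝕜) + 1 - k) / (n + 1) := by
  have hne : ((n + 1).choose k : 𝕜) ≠ 0 := by exact_mod_cast (choose_pos hk).ne'
  rw [div_eq_div_iff hne (cast_add_one_ne_zero n)]
  have h := congrArg (Nat.cast : ℕ → 𝕜) (choose_mul_succ_eq n k)
  push_cast [Nat.cast_sub hk] at h
  linear_combination h

end Nat

/-- The converse bound `R_LB(t)` on the selfish load. -/
def selfishLoadBound (K α t : ℕ) : ℚ :=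
  ((α.choose (t + 1) : ℚ) + ((K : ℚ) - α) * ((α - 1).choose t : ℚ)) / (α.choose t : ℚ)

def manLoad (K t : ℕ) : ℚ :=
  (K.choose (t + 1) : ℚ) / (K.choose t : ℚ)

theorem manLoad_eq {K t : ℕ} (ht : t ≤ K) : manLoad K t = ((K : ℚ) - t) / (t + 1) :=
  Nat.cast_choose_succ_div_cast_choose ht

theorem selfishLoadBound_eq {K α t : ℕ} (hα : 0 < α) (ht : t ≤ α) :
    selfishLoadBound K α t = ((α : ℚ) - t) / (t + 1) + ((K : ℚ) - α) * ((α - t) / α) := by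
  obtain ⟨a, rfl⟩ : ∃ a, α = a + 1 := ⟨α - 1, by omega⟩
  rw [selfishLoadBound, add_div, mul_div_assoc, Nat.cast_choose_succ_div_cast_choose ht,
    Nat.add_sub_cancel, Nat.cast_choose_div_cast_choose_succ ht]
  push_cast
  ring

theorem selfishLoadBound_sub_manLoad {K α t : ℕ} (hα : 0 < α) (htα : t ≤ α) (htK : t ≤ K) :
    selfishLoadBound K α t - manLoad K t =
      ((K : ℚ) - α) * t * ((α : ℚ) - 1 - t) / (α * (t + 1)) := by
  rw [selfishLoadBound_eq hα htα, manLoad_eq htK]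
  have : (α : ℚ) ≠ 0 := by exact_mod_cast hα.ne'
  field_simp
  ring

/-- The selfish converse load is at least the MAN load, strictly so for 1 ≤ t ≤ α - 2. -/
theorem selfish_ge_man (K α t : ℕ) (hα : 2 ≤ α) (hK : α ≤ K - 1) (ht : t ≤ α - 1) :
    (((α.choose (t + 1) : ℚ) + ((K : ℚ) - α) * ((α - 1).choose t : ℚ)) / (α.choose t : ℚ)
      ≥ (K.choose (t + 1) : ℚ) / (K.choose t : ℚ))
    ∧ (1 ≤ t → t ≤ α - 2 →
      ((α.choose (t + 1) : ℚ) + ((K : ℚ) - α) * ((α - 1).choose t : ℚ)) / (α.choose t : ℚ)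
        > (K.choose (t + 1) : ℚ) / (K.choose t : ℚ)) := by
  have hdiff := selfishLoadBound_sub_manLoad (K := K) (by omega) (by omega : t ≤ α) (by omega)
  have hKα : (α : ℚ) < K := by exact_mod_cast (by omega : α < K)
  have htα : (t : ℚ) + 1 ≤ α := by exact_mod_cast (by omega : t + 1 ≤ α)
  change manLoad K t ≤ selfishLoadBound K α t ∧
    (1 ≤ t → t ≤ α - 2 → manLoad K t < selfishLoadBound K α t)
  refine ⟨sub_nonneg.mp ?_, fun ht₁ ht₂ => sub_pos.mp ?_⟩ <;> rw [hdiff]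
  · have hgap : (0 : ℚ) ≤ α - 1 - t := by linarith
    positivity
  · have htpos : (0 : ℚ) < t := by exact_mod_cast ht₁
    have hgap : (0 : ℚ) < α - 1 - t := by
      have : (t : ℚ) + 2 ≤ α := by exact_mod_cast (by omega : t + 2 ≤ α)
      linarith
    positivity
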